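/- Head-symbol lemma: let t, u₁,...,uₙ, v be normal terms of the λΠ-calculus such that (t u₁ ... uₙ) is well-typed and its normal form is v. Then the head symbol of t is either the head symbol of v or a top variable of t. -/

import Mathlib

namespace LamPi

/-- Terms of the λΠ-calculus (de Bruijn indices). -/
inductive Tm : Type
  | type | kind
  | var (n : ℕ)
  | app (t u : Tm)
  | lam (A b : Tm)
  | pi  (A B : Tm)
deriving DecidableEq

/-- Lift free variables ≥ d by one. -/
def lift (d : ℕ) : Tm → Tm
  | .type => .type
  | .kind => .kind
  | .var n => if n < d then .var n else .var (n + 1)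
  | .app t u => .app (lift d t) (lift d u)
  | .lam A b => .lam (lift d A) (lift (d + 1) b)
  | .pi A B => .pi (lift d A) (lift (d + 1) B)

def liftN (k : ℕ) (t : Tm) : Tm := (lift 0)^[k] t

/-- Substitute u for the variable k. -/
def subst (k : ℕ) (u : Tm) : Tm → Tm
  | .type => .type
  | .kind => .kind
  | .var n => if n = k then u else if k < n then .var (n - 1) else .var n
  | .app t t' => .app (subst k u t) (subst k u t')
  | .lam A b => .lam (subst k u A) (subst (k + 1) (lift 0 u) b)
  | .pi A B => .pi (subst k u A) (subst (k + 1) (lift 0 u) B)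

/-- One-step β-reduction. -/
inductive Step : Tm → Tm → Prop
  | beta (A b u) : Step (.app (.lam A b) u) (subst 0 u b)
  | appL {t t'} (u) : Step t t' → Step (.app t u) (.app t' u)
  | appR (t) {u u'} : Step u u' → Step (.app t u) (.app t u')
  | lamA {A A'} (b) : Step A A' → Step (.lam A b) (.lam A' b)
  | lamB (A) {b b'} : Step b b' → Step (.lam A b) (.lam A b')
  | piA {A A'} (B) : Step A A' → Step (.pi A B) (.pi A' B)
  | piB (A) {B B'} : Step B B' → Step (.pi A B) (.pi A B')

/-- Many-step β-reduction. -/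
def Red : Tm → Tm → Prop := Relation.ReflTransGen Step

/-- β-equivalence ≅. -/
def Conv : Tm → Tm → Prop := Relation.EqvGen Step

/-- A term is normal if it contains no β-redex. -/
def Normal (t : Tm) : Prop := ∀ u, ¬ Step t u

def IsSort (s : Tm) : Prop := s = .type ∨ s = .kind

mutual
  /-- Well-formed contexts (head of the list is the most recent declaration). -/
  inductive WF : List Tm → Prop
    | nil : WF []
    | cons {Γ A s} : Typing Γ A s → IsSort s → WF (A :: Γ)
  /-- The typing judgement Γ ⊢ t : T of the λΠ-calculus. -/
  inductive Typing : List Tm → Tm → Tm → Prop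
    | sort {Γ} : WF Γ → Typing Γ .type .kind
    | var {Γ n A} : WF Γ → Γ[n]? = some A → Typing Γ (.var n) (liftN (n + 1) A)
    | pi {Γ A B s} : Typing Γ A .type → Typing (A :: Γ) B s → IsSort s →
        Typing Γ (.pi A B) s
    | lam {Γ A B b s} : Typing Γ (.pi A B) s → IsSort s → Typing (A :: Γ) b B →
        Typing Γ (.lam A b) (.pi A B)
    | app {Γ t u A B} : Typing Γ t (.pi A B) → Typing Γ u A →
        Typing Γ (.app t u) (subst 0 u B)
    | conv {Γ t A B s} : Typing Γ t A → Typing Γ A s → Typing Γ B s → IsSort s →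
        Conv A B → Typing Γ t B
end

/-- t is an object in Γ : it has a type T with Γ ⊢ T : Type. -/
def IsObject (Γ : List Tm) (t : Tm) : Prop := ∃ T, Typing Γ t T ∧ Typing Γ T .type

/-- The context Γ = [T:Type; a:T→T; b:T→T; c:T; d:T; P:T→Type; F:Πx:T.((P x)→T)].
Most recent declaration first: F = var 0, P = var 1, d = var 2, c = var 3,
b = var 4, a = var 5, T = var 6. -/
def Ctx0 : List Tm :=
  [ .pi (.var 5) (.pi (.app (.var 1) (.var 0)) (.var 7)),  -- F : Πx:T.((P x) → T)
    .pi (.var 4) .type,                                    -- P : T → Type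
    .var 3,                                                -- d : T
    .var 2,                                                -- c : T
    .pi (.var 1) (.var 2),                                 -- b : T → T
    .pi (.var 0) (.var 1),                                 -- a : T → T
    .type ]                                                -- T : Type

/-- The two-letter alphabet {A, B}. -/
inductive AB : Type
  | A | B
deriving DecidableEq

instance : Primcodable AB :=
  Primcodable.ofEquiv Bool
    ⟨fun x => match x with | .A => false | .B => true,
     fun b => if b then .B else .A,
     fun x => by cases x <;> rfl, fun b => by cases b <;> rfl⟩

/-- The encoding φ̂ of a word φ over {A,B} as a term of type T → T in Ctx0:
ε̂ = λy:T.y, (Aφ)̂ = λy:T.(a (φ̂ y)), (Bφ)̂ = λy:T.(b (φ̂ y)). -/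
def hat : List AB → Tm
  | [] => .lam (.var 6) (.var 0)
  | .A :: w => .lam (.var 6) (.app (.var 6) (.app (lift 0 (hat w)) (.var 0)))
  | .B :: w => .lam (.var 6) (.app (.var 5) (.app (lift 0 (hat w)) (.var 0)))

/-- λy:T.y in Ctx0. -/
def idT : Tm := .lam (.var 6) (.var 0)

/-- Iterated application (h u₁ ... uₙ). -/
def appList : Tm → List Tm → Tm
  | h, [] => h
  | h, u :: us => appList (.app h u) us

/-- Iterated abstraction λx₁:T₁....λxₙ:Tₙ.b. -/
def absList : List Tm → Tm → Tm
  | [], b => b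
  | A :: Ts, b => .lam A (absList Ts b)

/-- A solution of the Post problem: a nonempty sequence of indices whose
φ-concatenation equals its ψ-concatenation. -/
def HasSolution (pcp : List (List AB × List AB)) : Prop :=
  ∃ is : List (Fin pcp.length), is ≠ [] ∧
    (is.map fun i => (pcp.get i).1).flatten = (is.map fun i => (pcp.get i).2).flatten

/-- Head symbols: a free variable, a top variable (bound by one of the leading
abstractions), a sort, or (by convention) Π. -/
inductive HeadSym : Type
  | fvar (n : ℕ) | bvar (i : ℕ) | sType | sKind | hpi
deriving DecidableEq

def headSymbolAux : ℕ → Tm → HeadSym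
  | d, .lam _ b => headSymbolAux (d + 1) b
  | d, .app t _ => headSymbolAux d t
  | _, .pi _ _ => .hpi
  | _, .type => .sType
  | _, .kind => .sKind
  | d, .var n => if n < d then .bvar (d - 1 - n) else .fvar (n - d)

/-- The head symbol of a term (`bvar i` means the i-th top variable). -/
def headSymbol (t : Tm) : HeadSym := headSymbolAux 0 t

/-- (T→T) → ... → (T→T) → T with n arguments, where T is the variable k. -/
def nArr (k : ℕ) : ℕ → Tm
  | 0 => .var k
  | n + 1 => .pi (.pi (.var k) (.var (k + 1))) (nArr (k + 1) n)

/-- (T→T) → ... → (T→T) → Type with n arguments, where T is the variable k. -/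
def nArrTy (k : ℕ) : ℕ → Tm
  | 0 => .type
  | n + 1 => .pi (.pi (.var k) (.var (k + 1))) (nArrTy (k + 1) n)

/-- λx₁:T→T....λxₙ:T→T.body, where T is the variable k. -/
def lamChain (k : ℕ) : ℕ → Tm → Tm
  | 0, body => body
  | n + 1, body => .lam (.pi (.var k) (.var (k + 1))) (lamChain (k + 1) n body)

/-- Πx₁:T→T....Πxₙ:T→T.body, where T is the variable k. -/
def piChain (k : ℕ) : ℕ → Tm → Tm
  | 0, body => body
  | n + 1, body => .pi (.pi (.var k) (.var (k + 1))) (piChain (k + 1) n body)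

/-- (x_{i₁} (... (x_{iₚ} c)...)) under n leading binders in Ctx0: the j-th top
variable (0-indexed) is de Bruijn variable n-1-j, and c is variable 3+n. -/
def spine (n : ℕ) (is : List ℕ) : Tm :=
  is.foldr (fun i acc => .app (.var (n - 1 - i)) acc) (.var (3 + n))

/-- Pure (untyped) λ-terms. `fvar j` denotes the j-th free variable counted from
the bottom of the ambient context (so it is stable under context extension);
`bvar` is a de Bruijn index for bound variables. -/
inductive PTm : Type
  | bvar (n : ℕ) | fvar (n : ℕ) | app (t u : PTm) | lam (t : PTm)
deriving DecidableEq

/-- The content |t| of a term: erase all type annotations. L is the length of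
the ambient context, d the current binding depth. -/
def eraseAux (L : ℕ) : ℕ → Tm → PTm
  | d, .var n => if n < d then .bvar n else .fvar (L - 1 - (n - d))
  | d, .app t u => .app (eraseAux L d t) (eraseAux L d u)
  | d, .lam _ b => .lam (eraseAux L (d + 1) b)
  | _, _ => .bvar 0

def erase (L : ℕ) (t : Tm) : PTm := eraseAux L 0 t

/-- A pure term p is typable in Γ if some well-typed object t' in an extension
Δ ++ Γ of Γ has content p. -/
def Typable (Γ : List Tm) (p : PTm) : Prop :=
  ∃ (Δ : List Tm) (t : Tm), IsObject (Δ ++ Γ) t ∧ erase (Δ.length + Γ.length) t = p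

/-- An injective Gödel numbering of pure terms. -/
def PTm.enc : PTm → ℕ
  | .bvar n => Nat.pair 0 n
  | .fvar n => Nat.pair 1 n
  | .app t u => Nat.pair 2 (Nat.pair t.enc u.enc)
  | .lam t => Nat.pair 3 t.enc

/-- The untyped erasure φ̃ = |φ̂| of the encoding of a word (in Ctx0:
a = fvar 1, b = fvar 2). -/
def tilde : List AB → PTm
  | [] => .lam (.bvar 0)
  | .A :: w => .lam (.app (.fvar 1) (.app (tilde w) (.bvar 0)))
  | .B :: w => .lam (.app (.fvar 2) (.app (tilde w) (.bvar 0)))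

def pAppList : PTm → List PTm → PTm
  | h, [] => h
  | h, u :: us => pAppList (.app h u) us

/-- The pure term t = λf.λg.λh.(f (g a ... a) (h (g φ̃₁ ... φ̃ₙ)) (h (g ψ̃₁ ... ψ̃ₙ))
(F c (g (λy.y) ... (λy.y))) (F d (g (λy.d) ... (λy.d)))) associated to a Post
problem (in Ctx0: a = fvar 1, c = fvar 3, d = fvar 4, F = fvar 6;
f = bvar 2, g = bvar 1, h = bvar 0 under the three abstractions). -/
def postTerm (pcp : List (List AB × List AB)) : PTm :=
  let n := pcp.length
  .lam (.lam (.lam (pAppList (.bvar 2)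
    [ pAppList (.bvar 1) (List.replicate n (.fvar 1)),
      .app (.bvar 0) (pAppList (.bvar 1) (pcp.map fun pr => tilde pr.1)),
      .app (.bvar 0) (pAppList (.bvar 1) (pcp.map fun pr => tilde pr.2)),
      .app (.app (.fvar 6) (.fvar 3)) (pAppList (.bvar 1) (List.replicate n (.lam (.bvar 0)))),
      .app (.app (.fvar 6) (.fvar 4)) (pAppList (.bvar 1) (List.replicate n (.lam (.fvar 4)))) ])))

/-! ### Simply typed λ-calculus -/

/-- Simple types over one base type T. -/
inductive STy : Type
  | base | arr (A B : STy)
deriving DecidableEq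

/-- Curry-style simple typing of pure terms: Φ types the free variables
(fvar j has type Φ.get? j), Γ the bound ones. -/
inductive SJC : List STy → List STy → PTm → STy → Prop
  | bvar {Φ Γ n A} : Γ[n]? = some A → SJC Φ Γ (.bvar n) A
  | fvar {Φ Γ n A} : Φ[n]? = some A → SJC Φ Γ (.fvar n) A
  | app {Φ Γ t u A B} : SJC Φ Γ t (.arr A B) → SJC Φ Γ u A → SJC Φ Γ (.app t u) B
  | lam {Φ Γ t A B} : SJC Φ (A :: Γ) t B → SJC Φ Γ (.lam t) (.arr A B)

/-- A pure term is typable in the simply typed λ-calculus. -/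
def STypable (p : PTm) : Prop := ∃ Φ A, SJC Φ [] p A

/-- Church-style simply typed terms with constants a, b : T→T and c, d : T. -/
inductive STm : Type
  | var (n : ℕ) | ca | cb | cc | cd | app (t u : STm) | lam (A : STy) (b : STm)
deriving DecidableEq

def slift (d : ℕ) : STm → STm
  | .var n => if n < d then .var n else .var (n + 1)
  | .ca => .ca | .cb => .cb | .cc => .cc | .cd => .cd
  | .app t u => .app (slift d t) (slift d u)
  | .lam A b => .lam A (slift (d + 1) b)

def ssubst (k : ℕ) (u : STm) : STm → STm
  | .var n => if n = k then u else if k < n then .var (n - 1) else .var n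
  | .ca => .ca | .cb => .cb | .cc => .cc | .cd => .cd
  | .app t t' => .app (ssubst k u t) (ssubst k u t')
  | .lam A b => .lam A (ssubst (k + 1) (slift 0 u) b)

inductive SStep : STm → STm → Prop
  | beta (A b u) : SStep (.app (.lam A b) u) (ssubst 0 u b)
  | appL {t t'} (u) : SStep t t' → SStep (.app t u) (.app t' u)
  | appR (t) {u u'} : SStep u u' → SStep (.app t u) (.app t u')
  | lamB (A) {b b'} : SStep b b' → SStep (.lam A b) (.lam A b')

def SConv : STm → STm → Prop := Relation.EqvGen SStep

inductive ST : List STy → STm → STy → Prop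
  | var {Γ n A} : Γ[n]? = some A → ST Γ (.var n) A
  | ca {Γ} : ST Γ .ca (.arr .base .base)
  | cb {Γ} : ST Γ .cb (.arr .base .base)
  | cc {Γ} : ST Γ .cc .base
  | cd {Γ} : ST Γ .cd .base
  | app {Γ t u A B} : ST Γ t (.arr A B) → ST Γ u A → ST Γ (.app t u) B
  | lam {Γ A B b} : ST (A :: Γ) b B → ST Γ (.lam A b) (.arr A B)

/-- The third-order type (T→T) → ... → (T→T) → T with n arguments. -/
def nSTy : ℕ → STy
  | 0 => .base
  | n + 1 => .arr (.arr .base .base) (nSTy n)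

def sAppList : STm → List STm → STm
  | h, [] => h
  | h, u :: us => sAppList (.app h u) us

def STm.enc : STm → ℕ
  | .var n => Nat.pair 0 n
  | .ca => Nat.pair 1 0
  | .cb => Nat.pair 1 1
  | .cc => Nat.pair 1 2
  | .cd => Nat.pair 1 3
  | .app t u => Nat.pair 2 (Nat.pair t.enc u.enc)
  | .lam _ b => Nat.pair 3 b.enc

def encList (l : List ℕ) : ℕ := l.foldr (fun a b => Nat.pair a b + 1) 0

/-- Gödel numbering of a unification problem
(f t₁...tₙ) = (f t'₁...t'ₙ), (f u₁...uₙ) = u', (f v₁...vₙ) = v'. -/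
def encP (n : ℕ) (ts ts' us vs : List STm) (u' v' : STm) : ℕ :=
  Nat.pair n (Nat.pair (encList (ts.map STm.enc)) (Nat.pair (encList (ts'.map STm.enc))
    (Nat.pair (encList (us.map STm.enc)) (Nat.pair (encList (vs.map STm.enc))
      (Nat.pair u'.enc v'.enc)))))

/-- The unification system has a common solution for f. -/
def HasUnifSolution (n : ℕ) (ts ts' us vs : List STm) (u' v' : STm) : Prop :=
  ∃ f : STm, ST [] f (nSTy n) ∧
    SConv (sAppList f ts) (sAppList f ts') ∧
    SConv (sAppList f us) u' ∧
    SConv (sAppList f vs) v'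

end LamPi

namespace LamPi

/-!
A β-step can change the head symbol only by contracting a redex in head position, and the head
of such a redex is a λ, so the contraction substitutes for a top variable. Hence a head symbol
that is a free variable, a sort or Π is invariant under reduction; the head symbol of
`t u₁ ... uₙ` is that of `t`, so it survives to `v`.
-/

lemma headSymbolAux_appList (d : ℕ) (h : Tm) (us : List Tm) :
    headSymbolAux d (appList h us) = headSymbolAux d h := by
  induction us generalizing h with
  | nil => rfl
  | cons u us ih => exact ih (.app h u)

lemma headSymbolAux_subst (b u : Tm) {k d : ℕ} (hk : k ≤ d)
    (hb : ∀ i, headSymbolAux (d + 1) b ≠ .bvar i) :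
    headSymbolAux d (subst k u b) = headSymbolAux (d + 1) b := by
  induction b generalizing k d u with
  | type | kind | pi => rfl
  | app _ _ ih _ => exact ih u hk hb
  | lam _ b _ ih => exact ih (lift 0 u) (Nat.succ_le_succ hk) hb
  | var n =>
    by_cases hn : n < d + 1
    · exact absurd (by simp [headSymbolAux, hn]) (hb (d - n))
    · have hsub : subst k u (.var n) = .var (n - 1) := by
        simp only [subst, if_neg (show n ≠ k by omega), if_pos (show k < n by omega)]
      rw [hsub]
      simp only [headSymbolAux, if_neg hn, if_neg (show ¬ n - 1 < d by omega)]
      congr 1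
      omega

lemma headSymbolAux_step {t t' : Tm} (hs : Step t t') {d : ℕ}
    (ht : ∀ i, headSymbolAux d t ≠ .bvar i) :
    headSymbolAux d t' = headSymbolAux d t := by
  induction hs generalizing d with
  | beta _ b u => exact headSymbolAux_subst b u (Nat.zero_le d) ht
  | appL _ _ ih => exact ih ht
  | lamB _ _ ih => exact ih ht
  | appR | lamA | piA | piB => rfl

lemma headSymbolAux_red {t v : Tm} (hred : Red t v) {d : ℕ}
    (ht : ∀ i, headSymbolAux d t ≠ .bvar i) :
    headSymbolAux d v = headSymbolAux d t := by
  induction hred with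
  | refl => rfl
  | tail _ hs ih => exact (headSymbolAux_step hs (ih ▸ ht)).trans ih

/-- if t, u₁,...,uₙ, v are normal, (t u₁ ... uₙ) is well-typed and
its normal form is v, then the head symbol of t is the head symbol of v or a
top variable of t. -/
theorem head_symbol_lemma (Γ : List Tm) (T t v : Tm) (us : List Tm)
    (hnt : Normal t) (hnus : ∀ u ∈ us, Normal u) (hnv : Normal v)
    (hty : Typing Γ (appList t us) T) (hred : Red (appList t us) v) :
    headSymbol t = headSymbol v ∨ ∃ i, headSymbol t = HeadSym.bvar i := by
  refine or_iff_not_imp_right.2 fun htop => ?_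
  have happ : headSymbol (appList t us) = headSymbol t := headSymbolAux_appList 0 t us
  have hfree : ∀ i, headSymbol (appList t us) ≠ .bvar i := fun i h => htop ⟨i, happ ▸ h⟩
  exact happ.symm.trans (headSymbolAux_red hred hfree).symm

end LamPi
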